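/- arXiv:2509.24343 — 4 statements merged into one kernel-verified Lean document; each statement's English description precedes it below -/
import Mathlib

section
/- Let d ≥ 1. Let P be a predicate on ℤ^d-subshifts over finite alphabets B ⊂ ℕ which is nontrivial for effective subshifts: some effective ℤ^d-subshift satisfies P and some effective ℤ^d-subshift does not. Consider the decision problem S = {(B,e) : X_{B,e} satisfies P} over encoded effective inputs. If the empty subshift satisfies P, then S is Σ₁⁰-hard; if the empty subshift does not satisfy P, then S is Π₁⁰-hard (every complement of a recursively enumerable subset of ℕ many-one reduces to S). -/
namespace SubshiftsParam

/-- Configurations over an additive group `G` (e.g. `ℤ^d = Fin d → ℤ`, or `ℤ`),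
with colors in `ℕ`. -/
abbrev Config (G : Type) :=
  G → ℕ

variable {G : Type} [AddCommGroup G]

/-- The shift action: `σ^u(x)(v) = x(v+u)`. -/
def shift (u : G) (x : Config G) : Config G := fun v => x (v + u)

/-- A pattern, represented as (the graph of) a function from a finite subset of `G` to `ℕ`. -/
abbrev Pattern (G : Type) :=
  Finset (G × ℕ)

/-- The pattern is (the graph of) a function `p : S → ℕ`. -/
def Pattern.IsFunctional (p : Pattern G) : Prop :=
  ∀ q ∈ p, ∀ q' ∈ p, q.1 = q'.1 → q.2 = q'.2

/-- The pattern takes its values in the alphabet `B`. -/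
def Pattern.IsOver (p : Pattern G) (B : Finset ℕ) : Prop :=
  ∀ q ∈ p, q.2 ∈ B

/-- A valid `B`-pattern: a function on a finite domain, with values in `B`. -/
def ValidPattern (B : Finset ℕ) (p : Pattern G) : Prop :=
  Pattern.IsFunctional p ∧ Pattern.IsOver p B

/-- `p` occurs in `x` when `(σ^u x)|_S = p` for some `u`. -/
def OccursIn (p : Pattern G) (x : Config G) : Prop :=
  ∃ u : G, ∀ q ∈ p, x (q.1 + u) = q.2

/-- `X_{B,F}`: the set of `B`-configurations in which no pattern of `F` occurs. -/
def XF (B : Finset ℕ) (F : Set (Pattern G)) : Set (Config G) :=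
  {x | (∀ v, x v ∈ B) ∧ ∀ p ∈ F, ¬ OccursIn p x}

/-- A subshift: a closed, shift-invariant set of `B`-configurations for some finite
`B ⊆ ℕ` (the topology on `Config G` is the product of discrete topologies). -/
def IsSubshift (Y : Set (Config G)) : Prop :=
  (∃ B : Finset ℕ, ∀ x ∈ Y, ∀ v, x v ∈ B) ∧ IsClosed Y ∧
    ∀ u : G, ∀ x ∈ Y, shift u x ∈ Y

/-- Subshift of finite type: `Y = X_{B,F}` for some finite set `F` of `B`-patterns. -/
def IsSFT (Y : Set (Config G)) : Prop :=
  ∃ (B : Finset ℕ) (F : Finset (Pattern G)),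
    (∀ p ∈ F, ValidPattern B p) ∧ Y = XF B ↑F

/-- The image in `ℕ` of a set of elements of an encodable type, under the encoding. -/
def encodeSet {α : Type*} [Encodable α] (S : Set α) : Set ℕ :=
  {n | ∃ a ∈ S, Encodable.encode a = n}

/-- Effective subshift: `Y = X_{B,F}` for a recursively enumerable set `F` of
`B`-patterns (under the fixed encoding of patterns). -/
def IsEffective [Encodable G] (Y : Set (Config G)) : Prop :=
  ∃ (B : Finset ℕ) (F : Set (Pattern G)),
    (∀ p ∈ F, ValidPattern B p) ∧ REPred (· ∈ encodeSet F) ∧ Y = XF B F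

/-- A morphism from `Y` to `X`: a continuous shift-commuting map defined on `Y`,
with values in `X`. -/
def IsMorphismOn (Φ : Config G → Config G) (Y X : Set (Config G)) : Prop :=
  Set.MapsTo Φ Y X ∧ ContinuousOn Φ Y ∧
    ∀ u : G, ∀ y ∈ Y, Φ (shift u y) = shift u (Φ y)

/-- `Y` embeds into `X`: there is an injective morphism from `Y` to `X`. -/
def Embeds (Y X : Set (Config G)) : Prop :=
  ∃ Φ, IsMorphismOn Φ Y X ∧ Set.InjOn Φ Y

/-- `X` is conjugate to `Y`: there is a bijective morphism from `X` onto `Y`. -/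
def Conjugate (X Y : Set (Config G)) : Prop :=
  ∃ Φ, IsMorphismOn Φ X Y ∧ Set.InjOn Φ X ∧ Φ '' X = Y

/-- `X` factors onto `Y`: there is a surjective morphism from `X` onto `Y`. -/
def FactorsOnto (X Y : Set (Config G)) : Prop :=
  ∃ Φ, IsMorphismOn Φ X Y ∧ Φ '' X = Y

/-- The language of `Y`: the set of patterns occurring in some configuration of `Y`. -/
def language (Y : Set (Config G)) : Set (Pattern G) :=
  {p | ∃ y ∈ Y, OccursIn p y}

/-- A configuration is strongly periodic when its shift-orbit is finite. -/
def StronglyPeriodic (x : Config G) : Prop :=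
  (Set.range fun u : G => shift u x).Finite

/-- The decision problem, as a set of encoded SFT inputs `(B, F)` (with `F` a finite
set of `B`-patterns), of whether `X_{B,F}` satisfies `P`. -/
def sftProblem (G : Type) [AddCommGroup G] [Encodable G]
    (P : Set (Config G) → Prop) : Set ℕ :=
  {n | ∃ (B : Finset ℕ) (F : Finset (Pattern G)),
    n = Encodable.encode (B, F) ∧ (∀ p ∈ F, ValidPattern B p) ∧ P (XF B ↑F)}

/-- The r.e. subset of `ℕ` enumerated by the machine code `e`. -/
def enumSet (e : Nat.Partrec.Code) : Set ℕ :=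
  {m | ∃ n : ℕ, m ∈ e.eval n}

/-- The forbidden set of an effective input `(B, e)`: the recursively enumerable set
of `B`-patterns enumerated by `e`. -/
def effForbidden (G : Type) [AddCommGroup G] [Encodable G] (B : Finset ℕ)
    (e : Nat.Partrec.Code) : Set (Pattern G) :=
  {p | ValidPattern B p ∧ Encodable.encode p ∈ enumSet e}

/-- `X_{B,e}`: the effective subshift determined by the effective input `(B, e)`. -/
def Xeff (G : Type) [AddCommGroup G] [Encodable G] (B : Finset ℕ)
    (e : Nat.Partrec.Code) : Set (Config G) :=
  XF B (effForbidden G B e)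

/-- The decision problem, as a set of encoded effective inputs `(B, e)`,
of whether `X_{B,e}` satisfies `P`. -/
def effProblem (G : Type) [AddCommGroup G] [Encodable G]
    (P : Set (Config G) → Prop) : Set ℕ :=
  {n | ∃ (B : Finset ℕ) (e : Nat.Partrec.Code),
    n = Encodable.encode (B, e) ∧ P (Xeff G B e)}

/-- `S` is `Σ₁⁰`-hard: every r.e. subset of `ℕ` many-one reduces to `S`. -/
def Sigma01Hard (S : Set ℕ) : Prop :=
  ∀ A : Set ℕ, REPred (· ∈ A) → ManyOneReducible (· ∈ A) (· ∈ S)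

/-- `S` is `Σ₁⁰`-complete: r.e. and `Σ₁⁰`-hard. -/
def Sigma01Complete (S : Set ℕ) : Prop :=
  REPred (· ∈ S) ∧ Sigma01Hard S

/-- `S` is `Π₁⁰`-hard: the complement of every r.e. subset of `ℕ` many-one reduces to `S`. -/
def Pi01Hard (S : Set ℕ) : Prop :=
  ∀ A : Set ℕ, REPred (· ∈ A) → ManyOneReducible (· ∉ A) (· ∈ S)

/-- `S` is `Π₂⁰`: `S = {c | ∀ m, ∃ k, R c m k}` for a computable relation `R`. -/
def Pi02 (S : Set ℕ) : Prop :=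
  ∃ R : ℕ → ℕ → ℕ → Bool,
    Computable (fun t : ℕ × ℕ × ℕ => R t.1 t.2.1 t.2.2) ∧
    S = {c | ∀ m, ∃ k, R c m k = true}

/-- `S` is `Π₂⁰`-complete. -/
def Pi02Complete (S : Set ℕ) : Prop :=
  Pi02 S ∧ ∀ T : Set ℕ, Pi02 T → ManyOneReducible (· ∈ T) (· ∈ S)

/-- `S` is `Σ₃⁰`: `S = {c | ∃ n, ∀ m, ∃ k, R c n m k}` for a computable relation `R`. -/
def Sigma03 (S : Set ℕ) : Prop :=
  ∃ R : ℕ → ℕ → ℕ → ℕ → Bool,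
    Computable (fun t : ℕ × ℕ × ℕ × ℕ => R t.1 t.2.1 t.2.2.1 t.2.2.2) ∧
    S = {c | ∃ n, ∀ m, ∃ k, R c n m k = true}

/-- `S` is `Σ₃⁰`-complete. -/
def Sigma03Complete (S : Set ℕ) : Prop :=
  Sigma03 S ∧ ∀ T : Set ℕ, Sigma03 T → ManyOneReducible (· ∈ T) (· ∈ S)

/-- `S` is `D(Σ₁⁰)`-hard: for all r.e. `P, Q ⊆ ℕ`, the set `P \ Q` many-one reduces to `S`. -/
def DSigma01Hard (S : Set ℕ) : Prop :=
  ∀ P Q : Set ℕ, REPred (· ∈ P) → REPred (· ∈ Q) →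
    ManyOneReducible (· ∈ P \ Q) (· ∈ S)


open Nat.Partrec (Code)

/-- The auxiliary enumerator: on input `pair n (pair b y)`, if `b = 0` it semidecides
`y ∈ S₀` and outputs `y`; otherwise it semidecides `n ∈ A` and outputs `k₀`. -/
def gaux (S₀ A : Set ℕ) (k₀ : ℕ) : ℕ →. ℕ := fun z =>
  cond (decide (z.unpair.2.unpair.1 = 0))
    ((Part.assert (z.unpair.2.unpair.2 ∈ S₀) fun _ => Part.some ()).map
      fun _ => z.unpair.2.unpair.2)
    ((Part.assert (z.unpair.1 ∈ A) fun _ => Part.some ()).map fun _ => k₀)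

lemma gaux_partrec {S₀ A : Set ℕ} (k₀ : ℕ)
    (hS : REPred (· ∈ S₀)) (hA : REPred (· ∈ A)) : Partrec (gaux S₀ A k₀) := by
  have hy : Computable fun z : ℕ => z.unpair.2.unpair.2 :=
    (Primrec.snd.comp (Primrec.unpair.comp (Primrec.snd.comp Primrec.unpair))).to_comp
  have hn : Computable fun z : ℕ => z.unpair.1 :=
    (Primrec.fst.comp Primrec.unpair).to_comp
  have hc : Computable fun z : ℕ => decide (z.unpair.2.unpair.1 = 0) :=
    (Primrec.eq.comp (Primrec.fst.comp (Primrec.unpair.comp (Primrec.snd.comp Primrec.unpair)))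
      (Primrec.const 0)).decide.to_comp
  exact Partrec.cond hc
    ((hS.comp hy).map ((hy.comp Computable.fst).to₂))
    ((hA.comp hn).map (((Computable.const k₀).comp Computable.fst).to₂))

lemma mem_gaux {S₀ A : Set ℕ} {k₀ m n x : ℕ} :
    m ∈ gaux S₀ A k₀ (Nat.pair n x) ↔
      (x.unpair.1 = 0 ∧ m ∈ S₀ ∧ m = x.unpair.2) ∨ (x.unpair.1 ≠ 0 ∧ n ∈ A ∧ m = k₀) := by
  by_cases hb : x.unpair.1 = 0 <;>
      simp [gaux, hb, Nat.unpair_pair, Part.mem_map_iff, Part.mem_assert_iff, eq_comm] <;>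
    aesop

/-- The empty pattern is a valid `B`-pattern. -/
lemma validPattern_empty (B : Finset ℕ) : ValidPattern (G := G) B ∅ :=
  ⟨fun q hq => absurd hq (Finset.notMem_empty q), fun q hq => absurd hq (Finset.notMem_empty q)⟩

/-- The empty pattern occurs in every configuration. -/
lemma occursIn_empty (x : Config G) : OccursIn (∅ : Pattern G) x :=
  ⟨0, fun q hq => absurd hq (Finset.notMem_empty q)⟩

/-- If the empty pattern is forbidden, the subshift is empty. -/
lemma xf_eq_empty_of_mem {B : Finset ℕ} {F : Set (Pattern G)} (h : (∅ : Pattern G) ∈ F) :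
    XF B F = ∅ := by
  ext x
  simp only [Set.mem_empty_iff_false, iff_false]
  intro hx
  exact hx.2 ∅ h (occursIn_empty x)

/-- The key reduction: given an effective forbidden set `F₀` over `B` and an r.e. set `A`,
there is a computable map `n ↦ encode (B, eₙ)` with `X_{B,eₙ}` empty if `n ∈ A`
and `X_{B,eₙ} = X_{B,F₀}` otherwise. -/
lemma reduction_aux {G : Type} [AddCommGroup G] [Encodable G]
    (B : Finset ℕ) (F₀ : Set (Pattern G)) (hval : ∀ p ∈ F₀, ValidPattern B p)
    (hre : REPred (· ∈ encodeSet F₀)) (A : Set ℕ) (hA : REPred (· ∈ A)) :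
    ∃ f : ℕ → ℕ, Computable f ∧ ∀ n : ℕ, ∃ e : Code,
      f n = Encodable.encode (B, e) ∧ (n ∈ A → Xeff G B e = ∅) ∧
        (n ∉ A → Xeff G B e = XF B F₀) := by
  classical
  set S₀ : Set ℕ := encodeSet F₀ with hS₀
  set k₀ : ℕ := Encodable.encode (∅ : Pattern G) with hk₀
  obtain ⟨c₀, hc₀⟩ := Nat.Partrec.Code.exists_code.1 (Partrec.nat_iff.1 (gaux_partrec k₀ hre hA))
  obtain ⟨smf, hsmf, hev⟩ := Nat.Partrec.Code.smn
  refine ⟨fun n => Nat.pair (Encodable.encode B) (Encodable.encode (smf c₀ n)), ?_, ?_⟩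
  · exact Primrec₂.natPair.to_comp.comp (Computable.const (Encodable.encode B))
      (Computable.encode.comp (hsmf.comp (Computable.const c₀) Computable.id))
  intro n
  have henum : ∀ m : ℕ, m ∈ enumSet (smf c₀ n) ↔
      m ∈ S₀ ∨ (n ∈ A ∧ m = k₀) := by
    intro m
    constructor
    · rintro ⟨x, hx⟩
      rw [hev, hc₀] at hx
      rcases mem_gaux.1 hx with ⟨_, hm, _⟩ | ⟨_, hn, hm⟩
      · exact Or.inl hm
      · exact Or.inr ⟨hn, hm⟩
    · rintro (hm | ⟨hn, hm⟩)
      · exact ⟨Nat.pair 0 m, by rw [hev, hc₀]; exact mem_gaux.2 (Or.inl (by simp [hm]))⟩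
      · exact ⟨Nat.pair 1 0, by rw [hev, hc₀]; exact mem_gaux.2 (Or.inr (by simp [hn, hm]))⟩
  refine ⟨smf c₀ n, (Encodable.encode_prod_val B (smf c₀ n)).symm, ?_, ?_⟩
  · intro hn
    refine xf_eq_empty_of_mem ⟨validPattern_empty B, ?_⟩
    exact (henum k₀).2 (Or.inr ⟨hn, rfl⟩)
  · intro hn
    have hF : effForbidden G B (smf c₀ n) = F₀ := by
      ext p
      constructor
      · rintro ⟨hv, hm⟩
        rcases (henum _).1 hm with hm | ⟨hnA, _⟩
        · obtain ⟨a, ha, hea⟩ := hm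
          rwa [Encodable.encode_injective hea] at ha
        · exact absurd hnA hn
      · intro hp
        exact ⟨hval p hp, (henum _).2 (Or.inl ⟨p, hp, rfl⟩)⟩
    rw [Xeff, hF]

/-- a Rice theorem for effective `ℤ^d`-subshifts, `d ≥ 1`. -/
theorem statement_1 (d : ℕ) (hd : 1 ≤ d) (P : Set (Config (Fin d → ℤ)) → Prop)
    (hsome : ∃ Y : Set (Config (Fin d → ℤ)), IsEffective Y ∧ P Y)
    (hnot : ∃ Y : Set (Config (Fin d → ℤ)), IsEffective Y ∧ ¬ P Y) :
    (P (∅ : Set (Config (Fin d → ℤ))) → Sigma01Hard (effProblem (Fin d → ℤ) P)) ∧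
    (¬ P (∅ : Set (Config (Fin d → ℤ))) → Pi01Hard (effProblem (Fin d → ℤ) P)) := by
  constructor
  · intro hP A hA
    obtain ⟨Y₀, ⟨B, F₀, hval, hre, hY⟩, hnP⟩ := hnot
    obtain ⟨f, hf, hfn⟩ := reduction_aux B F₀ hval hre A hA
    refine ⟨f, hf, fun n => ⟨fun h => ?_, fun h => ?_⟩⟩
    · obtain ⟨e, hfe, h1, _⟩ := hfn n
      exact ⟨B, e, hfe, by rw [h1 h]; exact hP⟩
    · by_contra hn
      obtain ⟨e, hfe, _, h2⟩ := hfn n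
      obtain ⟨B', e', hfe', hP'⟩ := h
      have heq : (B', e') = (B, e) := Encodable.encode_injective (hfe'.symm.trans hfe)
      rw [Prod.mk.injEq] at heq
      rw [heq.1, heq.2, h2 hn, ← hY] at hP'
      exact hnP hP'
  · intro hP A hA
    obtain ⟨Y₀, ⟨B, F₀, hval, hre, hY⟩, hPY⟩ := hsome
    obtain ⟨f, hf, hfn⟩ := reduction_aux B F₀ hval hre A hA
    refine ⟨f, hf, fun n => ⟨fun h => ?_, fun h hn => ?_⟩⟩
    · obtain ⟨e, hfe, _, h2⟩ := hfn n
      exact ⟨B, e, hfe, by rw [h2 h, ← hY]; exact hPY⟩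
    · obtain ⟨e, hfe, h1, _⟩ := hfn n
      obtain ⟨B', e', hfe', hP'⟩ := h
      have heq : (B', e') = (B, e) := Encodable.encode_injective (hfe'.symm.trans hfe)
      rw [Prod.mk.injEq] at heq
      rw [heq.1, heq.2, h1 hn] at hP'
      exact hP hP'


end SubshiftsParam
end

section
/- Let d ≥ 1 and let Y be a nonempty effective ℤ^d-subshift. Then the decision problem {(B,e) : X_{B,e} = Y} over encoded effective inputs is D(Σ₁⁰)-hard: for all recursively enumerable sets P, Q ⊆ ℕ, the set P ∖ Q many-one reduces to it. -/
namespace SubshiftsParam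

variable {G : Type} [AddCommGroup G]

open Encodable in
/-- for `d ≥ 1` and a nonempty effective `ℤ^d`-subshift `Y`, the
problem `X = Y` on effective inputs is `D(Σ₁⁰)`-hard. -/
theorem statement_14 (d : ℕ) (hd : 1 ≤ d) (Y : Set (Config (Fin d → ℤ)))
    (hY : IsEffective Y) (hne : Y.Nonempty) :
    DSigma01Hard (effProblem (Fin d → ℤ) (fun X => X = Y)) := by
  classical
  obtain ⟨B, F, hFval, hFre, hYeq⟩ := hY
  intro P Q hP hQ
  -- fresh color and extended alphabet
  set c : ℕ := B.sup id + 1 with hc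
  have hcB : c ∉ B := fun h => by
    have := Finset.le_sup (f := id) h
    simp only [id] at this; omega
  set B' : Finset ℕ := insert c B with hB'
  -- singleton patterns
  set Sing : ℕ → Pattern (Fin d → ℤ) := fun b => {((0 : Fin d → ℤ), b)} with hSing
  have hoccSing : ∀ (b : ℕ) (x : Config (Fin d → ℤ)),
      OccursIn (Sing b) x ↔ ∃ u, x u = b := by
    intro b x
    constructor
    · rintro ⟨u, hu⟩
      exact ⟨u, by simpa using hu (0, b) (by simp [hSing])⟩
    · rintro ⟨u, hu⟩
      exact ⟨u, by rintro q hq; simp [hSing] at hq; subst hq; simpa using hu⟩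
  have hSingVal : ∀ b ∈ B', ValidPattern B' (Sing b) := by
    intro b hb
    constructor
    · rintro q hq q' hq' _
      simp [hSing] at hq hq'; subst hq; subst hq'; rfl
    · rintro q hq; simp [hSing] at hq; subst hq; simpa using hb
  have hFval' : ∀ p ∈ F, ValidPattern B' p := by
    intro p hp
    exact ⟨(hFval p hp).1, fun q hq => Finset.mem_insert_of_mem ((hFval p hp).2 q hq)⟩
  have hFne : (∅ : Pattern (Fin d → ℤ)) ∉ F := by
    intro h
    obtain ⟨y, hy⟩ := hne
    rw [hYeq] at hy
    exact hy.2 ∅ h ⟨0, by simp⟩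
  set L : List ℕ := B'.toList.map (fun b => encode (Sing b)) with hL
  have hscL : encode (Sing c) ∈ L := by
    rw [hL]
    exact List.mem_map_of_mem (by simp [Finset.mem_toList, hB'])
  -- the partial recursive function
  set g : ℕ × ℕ →. ℕ := fun p =>
    cond (decide (p.2.unpair.1 = 0))
      (Part.assert (p.2.unpair.2 ∈ encodeSet F) fun _ => Part.some p.2.unpair.2)
      (cond (decide (p.2.unpair.1 = 1))
        (Part.assert (p.1 ∈ P) fun _ => Part.some (encode (Sing c)))
        (Part.assert (p.1 ∈ Q) fun _ =>
          Part.some (L.getD p.2.unpair.2 (encode (Sing c))))) with hg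
  have hgc : Partrec g := by
    have hu1 : Primrec fun p : ℕ × ℕ => p.2.unpair.1 :=
      Primrec.fst.comp (Primrec.unpair.comp Primrec.snd)
    have hu2 : Computable fun p : ℕ × ℕ => p.2.unpair.2 :=
      (Primrec.snd.comp (Primrec.unpair.comp Primrec.snd)).to_comp
    apply Partrec.cond ((Primrec.eq.comp hu1 (Primrec.const 0)).decide.to_comp)
    · exact ((hFre.comp hu2).map ((hu2.comp Computable.fst).to₂)).of_eq fun p =>
        Part.ext fun m => by simp [Part.mem_assert_iff, eq_comm]
    apply Partrec.cond ((Primrec.eq.comp hu1 (Primrec.const 1)).decide.to_comp)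
    · exact ((hP.comp Computable.fst).map
        (((Computable.const (encode (Sing c))).comp Computable.fst).to₂)).of_eq
        fun p => Part.ext fun m => by simp [Part.mem_assert_iff, eq_comm]
    · have hv : Computable fun p : ℕ × ℕ => L.getD p.2.unpair.2 (encode (Sing c)) :=
        ((Primrec.list_getD (encode (Sing c))).comp (Primrec.const L)
          (Primrec.snd.comp (Primrec.unpair.comp Primrec.snd))).to_comp
      exact ((hQ.comp Computable.fst).map ((hv.comp Computable.fst).to₂)).of_eq
        fun p => Part.ext fun m => by simp [Part.mem_assert_iff, eq_comm]
  obtain ⟨c₀, hc₀⟩ := Nat.Partrec.Code.exists_code.1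
    (Partrec.nat_iff.1 (hgc.comp (Primrec.unpair.to_comp)))
  set e : ℕ → Nat.Partrec.Code := fun n => c₀.curry n with he
  have heval : ∀ n k, (e n).eval k = g (n, k) := by
    intro n k
    rw [he]
    simp only [Nat.Partrec.Code.eval_curry, hc₀]
    simp
  -- characterize the enumerated set
  have hE : ∀ n m, m ∈ enumSet (e n) ↔
      (m ∈ encodeSet F ∨ (n ∈ P ∧ m = encode (Sing c)) ∨ (n ∈ Q ∧ m ∈ L)) := by
    intro n m
    constructor
    · rintro ⟨k, hk⟩
      rw [heval] at hk
      by_cases h0 : k.unpair.1 = 0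
      · left
        simp only [hg, h0, Part.mem_assert_iff, decide_eq_true_eq] at hk
        simp at hk
        obtain ⟨hm, hm2⟩ := hk
        subst hm2; exact hm
      by_cases h1 : k.unpair.1 = 1
      · right; left
        simp only [hg, h0, h1] at hk
        simp [Part.mem_assert_iff] at hk
        obtain ⟨hm, hm2⟩ := hk
        subst hm2; exact ⟨hm, rfl⟩
      · right; right
        simp only [hg, h0, h1] at hk
        simp [Part.mem_assert_iff] at hk
        obtain ⟨hm, hm2⟩ := hk
        refine ⟨hm, ?_⟩
        rcases lt_or_ge k.unpair.2 L.length with h | h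
        · rw [List.getElem?_eq_getElem h] at hm2
          simp at hm2; subst hm2; exact List.getElem_mem h
        · rw [List.getElem?_eq_none h] at hm2
          simp at hm2; subst hm2; exact hscL
    · rintro (hm | ⟨hn, rfl⟩ | ⟨hn, hm⟩)
      · refine ⟨Nat.pair 0 m, ?_⟩
        rw [heval]
        simp [hg, Part.mem_assert_iff, hm]
      · refine ⟨Nat.pair 1 0, ?_⟩
        rw [heval]
        simp [hg, Part.mem_assert_iff, hn]
      · obtain ⟨i, hi, hig⟩ := List.mem_iff_getElem.1 hm
        refine ⟨Nat.pair 2 i, ?_⟩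
        rw [heval]
        simp [hg, Part.mem_assert_iff, hn]
        rw [List.getElem?_eq_getElem hi]
        simp [hig]
  -- characterize the forbidden sets
  have hForb : ∀ n, effForbidden (Fin d → ℤ) B' (e n) =
      {p | p ∈ F ∨ (n ∈ P ∧ p = Sing c) ∨ (n ∈ Q ∧ ∃ b ∈ B', p = Sing b)} := by
    intro n
    ext p
    simp only [effForbidden, Set.mem_setOf_eq, hE]
    constructor
    · rintro ⟨hv, hm | ⟨hn, hm⟩ | ⟨hn, hm⟩⟩
      · left
        obtain ⟨a, ha, hae⟩ := hm
        rwa [← encode_injective hae]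
      · right; left; exact ⟨hn, encode_injective hm⟩
      · right; right
        refine ⟨hn, ?_⟩
        rw [hL] at hm
        obtain ⟨b, hb, hbe⟩ := List.mem_map.1 hm
        exact ⟨b, by simpa [Finset.mem_toList] using hb, (encode_injective hbe).symm⟩
    · rintro (hp | ⟨hn, rfl⟩ | ⟨hn, b, hb, rfl⟩)
      · exact ⟨hFval' p hp, Or.inl ⟨p, hp, rfl⟩⟩
      · exact ⟨hSingVal c (by simp [hB']), Or.inr (Or.inl ⟨hn, rfl⟩)⟩
      · refine ⟨hSingVal b hb, Or.inr (Or.inr ⟨hn, ?_⟩)⟩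
        rw [hL]
        exact List.mem_map_of_mem (by simpa [Finset.mem_toList] using hb)
  -- case analysis on the subshift
  have hcaseA : ∀ n, n ∈ P → n ∉ Q → Xeff (Fin d → ℤ) B' (e n) = Y := by
    intro n hnP hnQ
    rw [hYeq]
    ext x
    simp only [Xeff, XF, Set.mem_setOf_eq, hForb n]
    constructor
    · rintro ⟨h1, h2⟩
      have hsc : ¬ OccursIn (Sing c) x := h2 (Sing c) (Or.inr (Or.inl ⟨hnP, rfl⟩))
      rw [hoccSing] at hsc
      push_neg at hsc
      refine ⟨fun v => ?_, fun p hp => h2 p (Or.inl hp)⟩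
      have := h1 v
      rw [hB', Finset.mem_insert] at this
      rcases this with h | h
      · exact absurd h (hsc v)
      · exact h
    · rintro ⟨h1, h2⟩
      refine ⟨fun v => Finset.mem_insert_of_mem (h1 v), ?_⟩
      rintro p (hp | ⟨_, rfl⟩ | ⟨hn, _⟩)
      · exact h2 p hp
      · rw [hoccSing]
        rintro ⟨u, hu⟩
        exact hcB (hu ▸ h1 u)
      · exact absurd hn hnQ
  have hcaseB : ∀ n, n ∈ Q → Xeff (Fin d → ℤ) B' (e n) ≠ Y := by
    intro n hnQ hXY
    obtain ⟨y, hy⟩ := hne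
    rw [← hXY] at hy
    obtain ⟨h1, h2⟩ := hy
    refine h2 (Sing (y 0)) ?_ ((hoccSing _ y).2 ⟨0, rfl⟩)
    rw [hForb n]
    exact Or.inr (Or.inr ⟨hnQ, y 0, h1 0, rfl⟩)
  have hcaseC : ∀ n, n ∉ P → n ∉ Q → Xeff (Fin d → ℤ) B' (e n) ≠ Y := by
    intro n hnP hnQ hXY
    have hcY : (fun _ => c : Config (Fin d → ℤ)) ∈ Y := by
      rw [← hXY]
      refine ⟨fun v => by simp [hB'], ?_⟩
      rintro p hp hocc
      rw [hForb n] at hp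
      rcases hp with hp | ⟨hn, _⟩ | ⟨hn, _⟩
      · obtain ⟨u, hu⟩ := hocc
        rcases Finset.eq_empty_or_nonempty p with rfl | ⟨q, hq⟩
        · exact hFne hp
        · have hc2 : c = q.2 := hu q hq
          have := (hFval p hp).2 q hq
          rw [← hc2] at this
          exact hcB this
      · exact hnP hn
      · exact hnQ hn
    rw [hYeq] at hcY
    exact hcB (hcY.1 0)
  -- the reduction
  refine ⟨fun n => encode (B', e n), ?_, ?_⟩
  · have hcu : Primrec fun n => c₀.curry n :=
      Nat.Partrec.Code.primrec₂_curry.comp (Primrec.const c₀) Primrec.id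
    simp only [Encodable.encode_prod_val]
    exact (Primrec₂.natPair.comp (Primrec.const (encode B'))
      (Primrec.encode.comp hcu)).to_comp
  · intro n
    constructor
    · rintro ⟨hnP, hnQ⟩
      exact ⟨B', e n, rfl, hcaseA n hnP hnQ⟩
    · rintro ⟨B₂, e₂, henc, hXY⟩
      have hpe : (B', e n) = (B₂, e₂) := encode_injective henc
      injection hpe with h1 h2
      rw [← h1, ← h2] at hXY
      by_cases hnQ : n ∈ Q
      · exact absurd hXY (hcaseB n hnQ)
      by_cases hnP : n ∈ P
      · exact ⟨hnP, hnQ⟩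
      · exact absurd hXY (hcaseC n hnP hnQ)


end SubshiftsParam
end

section
/- Let d ≥ 1 and let Y be a nonempty ℤ^d-SFT. Then the decision problem {(B,e) : X_{B,e} is conjugate to Y} over encoded effective inputs is D(Σ₁⁰)-hard: for all recursively enumerable sets P, Q ⊆ ℕ, the set P ∖ Q many-one reduces to it. -/
namespace SubshiftsParam

variable {G : Type} [AddCommGroup G]

section AuxiliaryLemmas

variable {G : Type} [AddCommGroup G]

lemma XF_shift {B : Finset ℕ} {F : Set (Pattern G)} {x : Config G} (hx : x ∈ XF B F) (u : G) :
    shift u x ∈ XF B F := by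
  obtain ⟨hb, hf⟩ := hx
  refine ⟨fun v => hb _, fun p hp hocc => hf p hp ?_⟩
  obtain ⟨w, hw⟩ := hocc
  exact ⟨w + u, fun q hq => by simpa [shift, add_assoc] using hw q hq⟩

lemma fix_eq_const {x : Config G} (h : ∀ u, shift u x = x) : x = fun _ => x 0 := by
  funext v
  have := congrFun (h v) 0
  simpa [shift] using this

lemma fixSet_finite (B : Finset ℕ) (F : Set (Pattern G)) :
    {x | x ∈ XF B F ∧ ∀ u, shift u x = x}.Finite := by
  apply Set.Finite.subset (B.finite_toSet.image (fun c => (fun _ => c : Config G)))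
  rintro x ⟨hx, hfix⟩
  exact ⟨x 0, hx.1 0, (fix_eq_const hfix).symm⟩

lemma conjugate_refl (X : Set (Config G)) : Conjugate X X :=
  ⟨id, ⟨Set.mapsTo_id X, continuousOn_id, fun _ _ _ => rfl⟩, Set.injOn_id X, Set.image_id X⟩

lemma not_conjugate_extra {X Y : Set (Config G)}
    (hXinv : ∀ u, ∀ x ∈ X, shift u x ∈ X)
    (hfin : {x | x ∈ X ∧ ∀ u, shift u x = x}.Finite)
    (hYX : Y ⊆ X) (z : Config G) (hzX : z ∈ X) (hzfix : ∀ u, shift u z = z)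
    (hzY : z ∉ Y) : ¬ Conjugate X Y := by
  rintro ⟨Φ, ⟨hmaps, -, hcomm⟩, hinj, himg⟩
  set FX := {x | x ∈ X ∧ ∀ u, shift u x = x} with hFXdef
  set FY := {x | x ∈ Y ∧ ∀ u, shift u x = x} with hFYdef
  have himgF : Φ '' FX = FY := by
    apply Set.Subset.antisymm
    · rintro _ ⟨x, ⟨hxX, hxf⟩, rfl⟩
      exact ⟨hmaps hxX, fun u => by rw [← hcomm u x hxX, hxf]⟩
    · rintro y ⟨hyY, hyf⟩
      have : y ∈ Φ '' X := himg.symm ▸ hyY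
      obtain ⟨x, hxX, rfl⟩ := this
      refine ⟨x, ⟨hxX, fun u => ?_⟩, rfl⟩
      apply hinj (hXinv u x hxX) hxX
      rw [hcomm u x hxX, hyf]
  have hsub : FY ⊂ FX := by
    constructor
    · rintro y ⟨h1, h2⟩; exact ⟨hYX h1, h2⟩
    · intro hcon; exact hzY (hcon ⟨hzX, hzfix⟩).1
  have h1 : FX.ncard = FY.ncard := by
    rw [← himgF]
    exact (Set.ncard_image_of_injOn (hinj.mono (fun x (hx : x ∈ FX) => hx.1))).symm
  have h2 : FY.ncard < FX.ncard := Set.ncard_lt_ncard hsub hfin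
  omega

end AuxiliaryLemmas

/-- Staged enumeration function used in the reduction. -/
def gAux (L0 LQ : List ℕ) (LP junk : ℕ) (PB QB : ℕ → ℕ → Bool) (n s : ℕ) : ℕ :=
  if s.unpair.1 < L0.length then L0.getD s.unpair.1 junk
  else if s.unpair.1 = L0.length then cond (PB n s.unpair.2) LP junk
  else cond (QB n s.unpair.2) (LQ.getD (s.unpair.1 - L0.length - 1) junk) junk

lemma gAux_primrec (L0 LQ : List ℕ) (LP junk : ℕ) {PB QB : ℕ → ℕ → Bool}
    (hPB : Primrec₂ PB) (hQB : Primrec₂ QB) :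
    Primrec₂ (gAux L0 LQ LP junk PB QB) := by
  have hi : Primrec fun p : ℕ × ℕ => p.2.unpair.1 :=
    Primrec.fst.comp (Primrec.unpair.comp Primrec.snd)
  have hk : Primrec fun p : ℕ × ℕ => p.2.unpair.2 :=
    Primrec.snd.comp (Primrec.unpair.comp Primrec.snd)
  have hb1 : Primrec fun p : ℕ × ℕ => L0.getD p.2.unpair.1 junk :=
    (Primrec.list_getD junk).comp (Primrec.const L0) hi
  have hb2 : Primrec fun p : ℕ × ℕ => cond (PB p.1 p.2.unpair.2) LP junk :=
    Primrec.cond (hPB.comp Primrec.fst hk) (Primrec.const LP) (Primrec.const junk)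
  have hidx : Primrec fun p : ℕ × ℕ => p.2.unpair.1 - L0.length - 1 :=
    Primrec.nat_sub.comp (Primrec.nat_sub.comp hi (Primrec.const L0.length)) (Primrec.const 1)
  have hb3 : Primrec fun p : ℕ × ℕ =>
      cond (QB p.1 p.2.unpair.2) (LQ.getD (p.2.unpair.1 - L0.length - 1) junk) junk :=
    Primrec.cond (hQB.comp Primrec.fst hk)
      ((Primrec.list_getD junk).comp (Primrec.const LQ) hidx) (Primrec.const junk)
  exact Primrec.ite (Primrec.nat_lt.comp hi (Primrec.const L0.length)) hb1
    (Primrec.ite (Primrec.eq.comp hi (Primrec.const L0.length)) hb2 hb3)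

lemma gAux_range (L0 LQ : List ℕ) (LP junk : ℕ) (PB QB : ℕ → ℕ → Bool) (n m : ℕ) :
    (∃ s, gAux L0 LQ LP junk PB QB n s = m) ↔
      (m ∈ L0 ∨ m = junk ∨ ((∃ k, PB n k = true) ∧ m = LP) ∨
        ((∃ k, QB n k = true) ∧ m ∈ LQ)) := by
  constructor
  · rintro ⟨s, hs⟩
    unfold gAux at hs
    split_ifs at hs with h1 h2
    · left
      rw [List.getD_eq_getElem?_getD, List.getElem?_eq_getElem h1] at hs
      exact hs ▸ List.getElem_mem h1
    · cases hb : PB n s.unpair.2 with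
      | false => rw [hb] at hs; right; left; exact hs.symm
      | true => rw [hb] at hs; right; right; left; exact ⟨⟨_, hb⟩, hs.symm⟩
    · cases hb : QB n s.unpair.2 with
      | false => rw [hb] at hs; right; left; exact hs.symm
      | true =>
        rw [hb] at hs
        by_cases hj : s.unpair.1 - L0.length - 1 < LQ.length
        · right; right; right
          refine ⟨⟨_, hb⟩, ?_⟩
          rw [List.getD_eq_getElem?_getD, List.getElem?_eq_getElem hj] at hs
          exact hs ▸ List.getElem_mem hj
        · right; left
          rw [List.getD_eq_getElem?_getD, List.getElem?_eq_none (by omega)] at hs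
          exact hs.symm
  · rintro (hm | hm | ⟨⟨k, hk⟩, rfl⟩ | ⟨⟨k, hk⟩, hm⟩)
    · obtain ⟨i, hi, rfl⟩ := List.mem_iff_getElem.1 hm
      refine ⟨Nat.pair i 0, ?_⟩
      unfold gAux
      simp only [Nat.unpair_pair]
      rw [if_pos hi, List.getD_eq_getElem?_getD, List.getElem?_eq_getElem hi]
      rfl
    · refine ⟨Nat.pair (L0.length + LQ.length + 1) 0, ?_⟩
      unfold gAux
      simp only [Nat.unpair_pair]
      rw [if_neg (by omega), if_neg (by omega)]
      rw [List.getD_eq_getElem?_getD, List.getElem?_eq_none (by omega)]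
      subst hm
      cases QB n 0 <;> rfl
    · refine ⟨Nat.pair L0.length k, ?_⟩
      unfold gAux
      simp only [Nat.unpair_pair]
      rw [if_neg (by omega)]
      simp [hk]
    · obtain ⟨j, hj, rfl⟩ := List.mem_iff_getElem.1 hm
      refine ⟨Nat.pair (L0.length + 1 + j) k, ?_⟩
      unfold gAux
      simp only [Nat.unpair_pair]
      rw [if_neg (by omega), if_neg (by omega), hk]
      have harith : L0.length + 1 + j - L0.length - 1 = j := by omega
      rw [harith]
      rw [List.getD_eq_getElem?_getD, List.getElem?_eq_getElem hj]
      rfl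

/-- From an r.e. predicate, a primitive recursive staged approximation. -/
lemma re_stage {P : Set ℕ} (hP : REPred (· ∈ P)) :
    ∃ PB : ℕ → ℕ → Bool, Primrec₂ PB ∧ ∀ n, n ∈ P ↔ ∃ k, PB n k = true := by
  have h1 : Partrec fun n => (Part.assert (n ∈ P) fun _ => Part.some ()).map fun _ => (0 : ℕ) :=
    hP.map ((Computable.const (0 : ℕ)).comp Computable.fst).to₂
  obtain ⟨cP, hcP⟩ := Nat.Partrec.Code.exists_code.1 (Partrec.nat_iff.1 h1)
  refine ⟨fun n k => (Nat.Partrec.Code.evaln k cP n).isSome, ?_, ?_⟩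
  · exact Primrec.option_isSome.comp
      (Nat.Partrec.Code.primrec_evaln.comp ((Primrec.snd.pair (Primrec.const cP)).pair Primrec.fst))
  · intro n
    constructor
    · intro hn
      have h0 : (0 : ℕ) ∈ Nat.Partrec.Code.eval cP n := by
        rw [hcP]
        exact Part.mem_map _ (by rw [Part.assert_pos hn]; exact Part.mem_some ())
      obtain ⟨k, hk⟩ := Nat.Partrec.Code.evaln_complete.1 h0
      exact ⟨k, by rw [Option.isSome_iff_exists]; exact ⟨0, hk⟩⟩
    · rintro ⟨k, hk⟩
      obtain ⟨x, hx⟩ := Option.isSome_iff_exists.1 hk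
      have hx' : x ∈ Nat.Partrec.Code.eval cP n := Nat.Partrec.Code.evaln_sound hx
      rw [hcP] at hx'
      obtain ⟨y, hy, -⟩ := (Part.mem_map_iff _).1 hx'
      exact (Part.mem_assert_iff.1 hy).1


/-- for `d ≥ 1` and a nonempty `ℤ^d`-SFT `Y`, the conjugacy problem
`X ≃ Y` on effective inputs is `D(Σ₁⁰)`-hard. -/
theorem statement_17 (d : ℕ) (hd : 1 ≤ d) (Y : Set (Config (Fin d → ℤ)))
    (hY : IsSFT Y) (hne : Y.Nonempty) :
    DSigma01Hard (effProblem (Fin d → ℤ) (fun X => Conjugate X Y)) := by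
  intro P Q hP hQ
  classical
  obtain ⟨BY, FY, hFYv, hYeq⟩ := hY
  obtain ⟨PB, hPBprim, hPiff⟩ := re_stage hP
  obtain ⟨QB, hQBprim, hQiff⟩ := re_stage hQ
  set a : ℕ := BY.sup id + 1 with ha
  have haB : a ∉ BY := by
    intro h
    have := Finset.le_sup (f := id) h
    simp only [id] at this
    omega
  set B' : Finset ℕ := insert a BY with hB'
  have haB' : a ∈ B' := Finset.mem_insert_self a BY
  set pa : Pattern (Fin d → ℤ) := {((0 : Fin d → ℤ), a)} with hpa
  set junkPat : Pattern (Fin d → ℤ) :=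
    {((0 : Fin d → ℤ), a), ((0 : Fin d → ℤ), a + 1)} with hjunkPat
  have hsingfun : ∀ z : (Fin d → ℤ) × ℕ, Pattern.IsFunctional ({z} : Pattern (Fin d → ℤ)) := by
    intro z q hq q' hq' _
    rw [Finset.mem_singleton] at hq hq'
    subst hq; subst hq'; rfl
  have hjunkNotValid : ¬ ValidPattern B' junkPat := by
    rintro ⟨hfun, -⟩
    have h1 : ((0 : Fin d → ℤ), a) ∈ junkPat := Finset.mem_insert_self _ _
    have h2 : ((0 : Fin d → ℤ), a + 1) ∈ junkPat :=
      Finset.mem_insert_of_mem (Finset.mem_singleton_self _)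
    have := hfun _ h1 _ h2 rfl
    omega
  have hpaValid : ValidPattern B' pa := by
    refine ⟨hsingfun _, fun q hq => ?_⟩
    rw [hpa, Finset.mem_singleton] at hq
    subst hq
    exact haB'
  have hFYvalid' : ∀ p ∈ FY, ValidPattern B' p := fun p hp =>
    ⟨(hFYv p hp).1, fun q hq => Finset.mem_insert_of_mem ((hFYv p hp).2 q hq)⟩
  have hFYne : ∀ p ∈ FY, p.Nonempty := by
    intro p hp
    rw [Finset.nonempty_iff_ne_empty]
    rintro rfl
    obtain ⟨y, hy⟩ := hne
    rw [hYeq] at hy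
    exact hy.2 ∅ (Finset.mem_coe.2 hp) ⟨0, fun q hq => absurd hq (Finset.notMem_empty q)⟩
  set junk : ℕ := Encodable.encode junkPat with hjunk
  set L0 : List ℕ := FY.toList.map Encodable.encode with hL0
  set LP : ℕ := Encodable.encode pa with hLPdef
  set LQ : List ℕ := B'.toList.map
    (fun b => Encodable.encode ({((0 : Fin d → ℤ), b)} : Pattern (Fin d → ℤ))) with hLQdef
  set g : ℕ → ℕ → ℕ := gAux L0 LQ LP junk PB QB with hg
  have hgcomp : Computable fun x : ℕ => g x.unpair.1 x.unpair.2 :=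
    ((gAux_primrec L0 LQ LP junk hPBprim hQBprim).comp
      (Primrec.fst.comp Primrec.unpair) (Primrec.snd.comp Primrec.unpair)).to_comp
  obtain ⟨c, hc⟩ := Nat.Partrec.Code.exists_code.1 (Partrec.nat_iff.1 hgcomp)
  have heval : ∀ n s, (Nat.Partrec.Code.curry c n).eval s = Part.some (g n s) := by
    intro n s
    rw [Nat.Partrec.Code.eval_curry, hc]
    simp [Nat.unpair_pair, PFun.coe_val]
  have henum : ∀ n m, m ∈ enumSet (Nat.Partrec.Code.curry c n) ↔ ∃ s, g n s = m := by
    intro n m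
    simp only [enumSet, Set.mem_setOf_eq, heval, Part.mem_some_iff]
    exact exists_congr fun s => eq_comm
  have hencinj : Function.Injective (Encodable.encode : Pattern (Fin d → ℤ) → ℕ) :=
    Encodable.encode_injective
  have hL0mem : ∀ p : Pattern (Fin d → ℤ), Encodable.encode p ∈ L0 ↔ p ∈ FY := by
    intro p
    simp only [hL0, List.mem_map, Finset.mem_toList]
    constructor
    · rintro ⟨q, hq, he⟩; rwa [← hencinj he]
    · intro hp; exact ⟨p, hp, rfl⟩
  have hLQmem : ∀ p : Pattern (Fin d → ℤ),
      Encodable.encode p ∈ LQ ↔ ∃ b ∈ B', p = {((0 : Fin d → ℤ), b)} := by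
    intro p
    simp only [hLQdef, List.mem_map, Finset.mem_toList]
    constructor
    · rintro ⟨b, hb, he⟩; exact ⟨b, hb, (hencinj he).symm⟩
    · rintro ⟨b, hb, rfl⟩; exact ⟨b, hb, rfl⟩
  have hE : ∀ n p, p ∈ effForbidden (Fin d → ℤ) B' (Nat.Partrec.Code.curry c n) ↔
      ValidPattern B' p ∧ (p ∈ FY ∨ p = junkPat ∨ (n ∈ P ∧ p = pa) ∨
        (n ∈ Q ∧ ∃ b ∈ B', p = {((0 : Fin d → ℤ), b)})) := by
    intro n p
    unfold effForbidden
    simp only [Set.mem_setOf_eq]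
    refine and_congr_right fun _ => ?_
    rw [henum n, hg, gAux_range]
    constructor
    · rintro (h | h | ⟨hp', h⟩ | ⟨hq', h⟩)
      · exact Or.inl ((hL0mem p).1 h)
      · exact Or.inr (Or.inl (hencinj h))
      · exact Or.inr (Or.inr (Or.inl ⟨(hPiff n).2 hp', hencinj h⟩))
      · exact Or.inr (Or.inr (Or.inr ⟨(hQiff n).2 hq', (hLQmem p).1 h⟩))
    · rintro (h | h | ⟨hp', h⟩ | ⟨hq', h⟩)
      · exact Or.inl ((hL0mem p).2 h)
      · exact Or.inr (Or.inl (by rw [h]))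
      · exact Or.inr (Or.inr (Or.inl ⟨(hPiff n).1 hp', by rw [h]⟩))
      · exact Or.inr (Or.inr (Or.inr ⟨(hQiff n).1 hq', (hLQmem p).2 h⟩))
  -- Case: n ∈ Q gives the empty subshift
  have hXQ : ∀ n, n ∈ Q → Xeff (Fin d → ℤ) B' (Nat.Partrec.Code.curry c n) = ∅ := by
    intro n hq
    ext x
    simp only [Set.mem_empty_iff_false, iff_false]
    rintro ⟨hball, hforb⟩
    have hp0E : ({((0 : Fin d → ℤ), x 0)} : Pattern (Fin d → ℤ)) ∈
        effForbidden (Fin d → ℤ) B' (Nat.Partrec.Code.curry c n) := by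
      refine (hE n _).2 ⟨⟨hsingfun _, fun q hq' => ?_⟩,
        Or.inr (Or.inr (Or.inr ⟨hq, ⟨x 0, hball 0, rfl⟩⟩))⟩
      rw [Finset.mem_singleton] at hq'
      subst hq'
      exact hball 0
    refine hforb _ hp0E ⟨0, fun q hq' => ?_⟩
    rw [Finset.mem_singleton] at hq'
    subst hq'
    simp
  -- Case: n ∈ P, n ∉ Q gives exactly Y
  have hXP : ∀ n, n ∈ P → n ∉ Q →
      Xeff (Fin d → ℤ) B' (Nat.Partrec.Code.curry c n) = Y := by
    intro n hp hq
    ext x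
    constructor
    · rintro ⟨hball, hforb⟩
      have hpaE : pa ∈ effForbidden (Fin d → ℤ) B' (Nat.Partrec.Code.curry c n) :=
        (hE n pa).2 ⟨hpaValid, Or.inr (Or.inr (Or.inl ⟨hp, rfl⟩))⟩
      have hnota : ∀ v, x v ≠ a := by
        intro v hv
        refine hforb pa hpaE ⟨v, fun q hq' => ?_⟩
        rw [hpa, Finset.mem_singleton] at hq'
        subst hq'
        simpa using hv
      rw [hYeq]
      refine ⟨fun v => ?_, fun p hpF hocc => ?_⟩
      · rcases Finset.mem_insert.1 (hball v) with h | h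
        · exact absurd h (hnota v)
        · exact h
      · have hpF' : p ∈ FY := Finset.mem_coe.1 hpF
        exact hforb p ((hE n p).2 ⟨hFYvalid' p hpF', Or.inl hpF'⟩) hocc
    · intro hx
      rw [hYeq] at hx
      obtain ⟨hball, hforb⟩ := hx
      refine ⟨fun v => Finset.mem_insert_of_mem (hball v), fun p hpE hocc => ?_⟩
      rcases (hE n p).1 hpE with ⟨hval, (h | h | ⟨-, h⟩ | ⟨hq', -⟩)⟩
      · exact hforb p (Finset.mem_coe.2 h) hocc
      · exact hjunkNotValid (h ▸ hval)
      · subst h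
        obtain ⟨u, hu⟩ := hocc
        have h0 : x ((0 : Fin d → ℤ) + u) = a := hu _ (Finset.mem_singleton_self _)
        have := hball ((0 : Fin d → ℤ) + u)
        rw [h0] at this
        exact haB this
      · exact hq hq'
  -- Case: n ∉ P, n ∉ Q: extra fixed point, not conjugate
  have hXnPQ : ∀ n, n ∉ P → n ∉ Q →
      ¬ Conjugate (Xeff (Fin d → ℤ) B' (Nat.Partrec.Code.curry c n)) Y := by
    intro n hp hq
    refine not_conjugate_extra (fun u x hx => XF_shift hx u) (fixSet_finite B' _)
      ?_ (fun _ => a) ?_ (fun u => rfl) ?_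
    · intro x hx
      rw [hYeq] at hx
      obtain ⟨hball, hforb⟩ := hx
      refine ⟨fun v => Finset.mem_insert_of_mem (hball v), fun p hpE hocc => ?_⟩
      rcases (hE n p).1 hpE with ⟨hval, (h | h | ⟨hp', -⟩ | ⟨hq', -⟩)⟩
      · exact hforb p (Finset.mem_coe.2 h) hocc
      · exact hjunkNotValid (h ▸ hval)
      · exact hp hp'
      · exact hq hq'
    · refine ⟨fun _ => haB', fun p hpE hocc => ?_⟩
      rcases (hE n p).1 hpE with ⟨hval, (h | h | ⟨hp', -⟩ | ⟨hq', -⟩)⟩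
      · obtain ⟨u, hu⟩ := hocc
        obtain ⟨q, hqmem⟩ := hFYne p h
        have h1 : a = q.2 := hu q hqmem
        have h2 : q.2 ∈ BY := (hFYv p h).2 q hqmem
        rw [← h1] at h2
        exact haB h2
      · exact hjunkNotValid (h ▸ hval)
      · exact hp hp'
      · exact hq hq'
    · intro hz
      rw [hYeq] at hz
      exact haB (hz.1 0)
  -- The reduction
  set f : ℕ → ℕ := fun n =>
    Nat.pair (Encodable.encode B') (Encodable.encode (Nat.Partrec.Code.curry c n)) with hf
  have hfenc : ∀ n, f n = Encodable.encode (B', Nat.Partrec.Code.curry c n) := fun n =>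
    (Encodable.encode_prod_val _ _).symm
  have hfcomp : Computable f := by
    have : Primrec f :=
      Primrec₂.natPair.comp (Primrec.const _)
        (Primrec.encode.comp (Nat.Partrec.Code.primrec₂_curry.comp (Primrec.const c) Primrec.id))
    exact this.to_comp
  refine ⟨f, hfcomp, fun n => ?_⟩
  constructor
  · rintro ⟨hnp, hnq⟩
    exact ⟨B', Nat.Partrec.Code.curry c n, hfenc n, by
      rw [hXP n hnp hnq]; exact conjugate_refl Y⟩
  · rintro ⟨B, e, henc2, hconj⟩
    rw [hfenc n] at henc2
    have hBe : (B', Nat.Partrec.Code.curry c n) = (B, e) := Encodable.encode_injective henc2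
    obtain ⟨rfl, rfl⟩ : B = B' ∧ e = Nat.Partrec.Code.curry c n := by
      rw [Prod.ext_iff] at hBe
      exact ⟨hBe.1.symm, hBe.2.symm⟩
    by_cases hq : n ∈ Q
    · exfalso
      rw [hXQ n hq] at hconj
      obtain ⟨Φ, -, -, himg⟩ := hconj
      rw [Set.image_empty] at himg
      exact hne.ne_empty himg.symm
    · by_cases hp : n ∈ P
      · exact ⟨hp, hq⟩
      · exact absurd hconj (hXnPQ n hp hq)

end SubshiftsParam
end

section
/- Let d ≥ 1, let π : ℤ^d → ℤ be a surjective group homomorphism, let A ⊂ ℕ be a finite alphabet, let Y' ⊆ A^ℤ be a ℤ-subshift, and let Y = {y ∘ π : y ∈ Y'} ⊆ A^{ℤ^d} be its lift. For a finite alphabet B ⊂ ℕ and a ℤ^d-subshift X of B-configurations, define W_X = {w : ℤ → B | w ∘ π ∈ X}. Then Y is a ℤ^d-subshift, W_X is a ℤ-subshift, and: (i) Y embeds into X if and only if Y' embeds into W_X; (ii) if A = B, then Y ⊆ X if and only if Y' ⊆ W_X. -/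
namespace SubshiftsParam

variable {G : Type} [AddCommGroup G]

/-- lifting a `ℤ`-subshift `Y'` along a surjective homomorphism
`π : ℤ^d → ℤ` gives a `ℤ^d`-subshift `Y`; for a `ℤ^d`-subshift `X`, the set
`W_X = {w : ℤ → B | w ∘ π ∈ X}` is a `ℤ`-subshift; `Y ↪ X` iff `Y' ↪ W_X`,
and (for equal alphabets) `Y ⊆ X` iff `Y' ⊆ W_X`. -/
theorem statement_19 (d : ℕ) (hd : 1 ≤ d)
    (π : (Fin d → ℤ) →+ ℤ) (hπ : Function.Surjective π)
    (A B : Finset ℕ)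
    (Y' : Set (Config ℤ)) (hY' : IsSubshift Y') (hA : ∀ y ∈ Y', ∀ v : ℤ, y v ∈ A)
    (X : Set (Config (Fin d → ℤ))) (hX : IsSubshift X)
    (hB : ∀ x ∈ X, ∀ v, x v ∈ B) :
    IsSubshift {x : Config (Fin d → ℤ) | ∃ y ∈ Y', x = fun u => y (π u)} ∧
    IsSubshift {w : Config ℤ | (fun u => w (π u)) ∈ X} ∧
    (Embeds {x : Config (Fin d → ℤ) | ∃ y ∈ Y', x = fun u => y (π u)} X ↔
      Embeds Y' {w : Config ℤ | (fun u => w (π u)) ∈ X}) ∧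
    (A = B →
      ({x : Config (Fin d → ℤ) | ∃ y ∈ Y', x = fun u => y (π u)} ⊆ X ↔
        Y' ⊆ {w : Config ℤ | (fun u => w (π u)) ∈ X})) := by
  classical
  obtain ⟨e, he⟩ := hπ 1
  have hpe : ∀ n : ℤ, π (n • e) = n := by
    intro n; rw [map_zsmul, he, smul_eq_mul, mul_one]
  -- lift and restriction maps
  set ℓ : Config ℤ → Config (Fin d → ℤ) := fun y v => y (π v) with hℓdef
  set r : Config (Fin d → ℤ) → Config ℤ := fun x n => x (n • e) with hrdef
  have hℓr : ∀ y : Config ℤ, r (ℓ y) = y := by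
    intro y; funext n; show y (π (n • e)) = y n; rw [hpe]
  have hcontℓ : Continuous ℓ := continuous_pi fun v => continuous_apply _
  have hcontr : Continuous r := continuous_pi fun n => continuous_apply _
  have hs1 : ∀ (y : Config ℤ) (n : ℤ), ℓ (shift n y) = shift (n • e) (ℓ y) := by
    intro y n; funext v; show y (π v + n) = y (π (v + n • e))
    rw [map_add, hpe]
  have hs2 : ∀ (y : Config ℤ) (u : Fin d → ℤ), shift u (ℓ y) = ℓ (shift (π u) y) := by
    intro y u; funext v; show y (π (v + u)) = y (π v + π u); rw [map_add]
  have hs5 : ∀ (z : Config (Fin d → ℤ)) (n : ℤ), r (shift (n • e) z) = shift n (r z) := by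
    intro z n; funext m; show z (m • e + n • e) = z ((m + n) • e)
    rw [add_zsmul]
  have hℓY : ∀ y ∈ Y', ℓ y ∈ {x : Config (Fin d → ℤ) | ∃ y ∈ Y', x = fun u => y (π u)} :=
    fun y hy => ⟨y, hy, rfl⟩
  have hrY : ∀ x ∈ {x : Config (Fin d → ℤ) | ∃ y ∈ Y', x = fun u => y (π u)}, r x ∈ Y' := by
    rintro x ⟨y, hy, rfl⟩
    show r (ℓ y) ∈ Y'
    rw [hℓr]; exact hy
  refine ⟨⟨⟨A, ?_⟩, ?_, ?_⟩, ⟨⟨B, ?_⟩, ?_, ?_⟩, ⟨?_, ?_⟩, ?_⟩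
  · -- alphabet of Y
    rintro x ⟨y, hy, rfl⟩ v
    exact hA y hy (π v)
  · -- Y closed
    have hset : {x : Config (Fin d → ℤ) | ∃ y ∈ Y', x = fun u => y (π u)} =
        r ⁻¹' Y' ∩ ⋂ v : Fin d → ℤ, {x | x v = x ((π v) • e)} := by
      ext x
      constructor
      · rintro ⟨y, hy, rfl⟩
        refine ⟨by show r (ℓ y) ∈ Y'; rw [hℓr]; exact hy, ?_⟩
        refine Set.mem_iInter.mpr fun v => ?_
        show y (π v) = y (π ((π v) • e))
        rw [hpe]
      · rintro ⟨h1, h2⟩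
        refine ⟨r x, h1, funext fun v => ?_⟩
        have := Set.mem_iInter.mp h2 v
        exact this
    rw [hset]
    exact (hY'.2.1.preimage hcontr).inter
      (isClosed_iInter fun v => isClosed_eq (continuous_apply v) (continuous_apply _))
  · -- Y shift invariant
    rintro u x ⟨y, hy, rfl⟩
    exact ⟨shift (π u) y, hY'.2.2 (π u) y hy, hs2 y u⟩
  · -- alphabet of W
    intro w hw n
    have := hB _ hw (n • e)
    show w n ∈ B
    have h2 : w (π (n • e)) ∈ B := this
    rwa [hpe] at h2
  · -- W closed
    exact hX.2.1.preimage hcontℓ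
  · -- W shift invariant
    intro n w hw
    show ℓ (shift n w) ∈ X
    rw [hs1]
    exact hX.2.2 (n • e) _ hw
  · -- Embeds Y X → Embeds Y' W
    rintro ⟨Φ, ⟨hmaps, hcont, hcomm⟩, hinj⟩
    have hfib : ∀ y ∈ Y', ∀ v, Φ (ℓ y) v = Φ (ℓ y) ((π v) • e) := by
      intro y hy v
      have hu : π (v - (π v) • e) = 0 := by rw [map_sub, hpe, sub_self]
      have h1 : shift (v - (π v) • e) (ℓ y) = ℓ y := by
        funext w; show y (π (w + (v - (π v) • e))) = y (π w)
        rw [map_add, hu, add_zero]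
      have h2 := hcomm (v - (π v) • e) (ℓ y) (hℓY y hy)
      rw [h1] at h2
      have h3 := congrFun h2 ((π v) • e)
      show Φ (ℓ y) v = Φ (ℓ y) ((π v) • e)
      rw [h3]
      show Φ (ℓ y) v = Φ (ℓ y) ((π v) • e + (v - (π v) • e))
      congr 1
      abel
    have key : ∀ y ∈ Y', ℓ (r (Φ (ℓ y))) = Φ (ℓ y) := by
      intro y hy; funext v
      show Φ (ℓ y) ((π v) • e) = Φ (ℓ y) v
      exact (hfib y hy v).symm
    refine ⟨fun y => r (Φ (ℓ y)), ⟨?_, ?_, ?_⟩, ?_⟩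
    · intro y hy
      show ℓ (r (Φ (ℓ y))) ∈ X
      rw [key y hy]
      exact hmaps (hℓY y hy)
    · exact hcontr.comp_continuousOn (hcont.comp hcontℓ.continuousOn hℓY)
    · intro n y hy
      show r (Φ (ℓ (shift n y))) = shift n (r (Φ (ℓ y)))
      rw [hs1, hcomm (n • e) (ℓ y) (hℓY y hy), hs5]
    · intro y hy y' hy' hΨ
      have h1 : ℓ (r (Φ (ℓ y))) = ℓ (r (Φ (ℓ y'))) := congrArg ℓ hΨ
      rw [key y hy, key y' hy'] at h1
      have h2 := hinj (hℓY y hy) (hℓY y' hy') h1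
      calc y = r (ℓ y) := (hℓr y).symm
        _ = r (ℓ y') := by rw [h2]
        _ = y' := hℓr y'
  · -- Embeds Y' W → Embeds Y X
    rintro ⟨Ψ, ⟨hmaps, hcont, hcomm⟩, hinj⟩
    refine ⟨fun x => ℓ (Ψ (r x)), ⟨?_, ?_, ?_⟩, ?_⟩
    · intro x hx
      exact hmaps (hrY x hx)
    · exact hcontℓ.comp_continuousOn (hcont.comp hcontr.continuousOn hrY)
    · rintro u x ⟨y, hy, rfl⟩
      show ℓ (Ψ (r (shift u (ℓ y)))) = shift u (ℓ (Ψ (r (ℓ y))))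
      rw [hs2, hℓr, hℓr, hcomm (π u) y hy, hs2]
    · rintro x ⟨y, hy, rfl⟩ x' ⟨y', hy', rfl⟩ h
      have h1 : ℓ (Ψ (r (ℓ y))) = ℓ (Ψ (r (ℓ y'))) := h
      rw [hℓr, hℓr] at h1
      have h2 : Ψ y = Ψ y' := by
        rw [← hℓr (Ψ y), ← hℓr (Ψ y'), h1]
      have h3 := hinj hy hy' h2
      show ℓ y = ℓ y'
      rw [h3]
  · -- subset equivalence
    intro _
    constructor
    · intro h y hy
      exact h ⟨y, hy, rfl⟩
    · rintro h x ⟨y, hy, rfl⟩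
      exact h hy

end SubshiftsParam
end
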